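/- arXiv:0711.2400 — 2 statements merged into one kernel-verified Lean document; each statement's English description precedes it below -/
import Mathlib

section
/- Let C = {{x} : x ∈ ℝ} be the collection of all singleton subsets of ℝ. Then every member of κ(C) is a countable set; in particular, ℝ \ {0} ∉ κ(C), even though ℝ \ {0} ∈ σ(C). Hence the condition 'A^c ∈ κ(C) for every A ∈ C' fails for this C, although A_F(x) = A_C(x) for every x ∈ ℝ; that is, this condition is not necessary for the atoms of σ(C) to be given by intersections over the generator. -/
open MeasureTheory Classical

variable {Ω : Type*}

/-- The intersection of all members of `C` containing `ω`, with the convention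
that it is `∅` when no member of `C` contains `ω`. -/
noncomputable def atomOf (C : Set (Set Ω)) (ω : Ω) : Set Ω :=
  if ∃ B ∈ C, ω ∈ B then ⋂₀ {B | B ∈ C ∧ ω ∈ B} else ∅

/-- `C_σ` : the collection of all countable unions of members of `C`. -/
def sigmaUnions (C : Set (Set Ω)) : Set (Set Ω) :=
  {A | ∃ f : ℕ → Set Ω, (∀ n, f n ∈ C) ∧ A = ⋃ n, f n}

/-- `C_σδ` : the collection of all countable intersections of members of `C_σ`. -/
def sigmaDelta (C : Set (Set Ω)) : Set (Set Ω) :=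
  {A | ∃ f : ℕ → Set Ω, (∀ n, f n ∈ sigmaUnions C) ∧ A = ⋂ n, f n}

/-- A κ class: closed under countable (nonempty) unions and intersections. -/
def IsKappaClass (K : Set (Set Ω)) : Prop :=
  (∀ f : ℕ → Set Ω, (∀ n, f n ∈ K) → (⋃ n, f n) ∈ K) ∧
  (∀ f : ℕ → Set Ω, (∀ n, f n ∈ K) → (⋂ n, f n) ∈ K)

/-- `κ(C)` : the smallest κ class containing `C`. -/
def kappa (C : Set (Set Ω)) : Set (Set Ω) :=
  ⋂₀ {K | IsKappaClass K ∧ C ⊆ K}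

/-- `σ(C)` viewed as the collection of its measurable sets. -/
def sigmaSets (C : Set (Set Ω)) : Set (Set Ω) :=
  {s | MeasurableSet[MeasurableSpace.generateFrom C] s}

/-
Countable sets form a κ class containing every singleton, so they contain κ(C); an intersection
of countable sets is countable because it lies inside any one of them. Since ℝ is uncountable,
the co-countable set ℝ \ {0} is not in κ(C), while it lies in σ(C) as a complement of a
generator. Every singleton belongs to both C and σ(C), so both atoms of x are {x}.
-/

theorem kappa_subset_of_isKappaClass {C K : Set (Set Ω)} (hK : IsKappaClass K) (hCK : C ⊆ K) :
    kappa C ⊆ K :=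
  Set.sInter_subset_of_mem ⟨hK, hCK⟩

theorem isKappaClass_countable : IsKappaClass {A : Set Ω | A.Countable} :=
  ⟨fun _ hf => Set.countable_iUnion hf,
    fun f hf => (hf 0).mono (Set.iInter_subset f 0)⟩

theorem countable_of_mem_kappa {C : Set (Set Ω)} (hC : ∀ B ∈ C, B.Countable) {A : Set Ω}
    (hA : A ∈ kappa C) : A.Countable :=
  kappa_subset_of_isKappaClass isKappaClass_countable hC hA

theorem subset_sigmaSets (C : Set (Set Ω)) : C ⊆ sigmaSets C :=
  fun _ => MeasurableSpace.measurableSet_generateFrom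

theorem compl_mem_sigmaSets {C : Set (Set Ω)} {s : Set Ω} (hs : s ∈ sigmaSets C) :
    sᶜ ∈ sigmaSets C :=
  MeasurableSet.compl (m := MeasurableSpace.generateFrom C) hs

theorem atomOf_eq_singleton {C : Set (Set Ω)} {ω : Ω} (hω : {ω} ∈ C) : atomOf C ω = {ω} := by
  rw [atomOf, if_pos ⟨{ω}, hω, rfl⟩]
  refine subset_antisymm (Set.sInter_subset_of_mem ⟨hω, rfl⟩) ?_
  rintro _ rfl B ⟨_, hB⟩
  exact hB

theorem not_countable_compl_of_countable {α : Type*} [Uncountable α] {s : Set α}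
    (hs : s.Countable) : ¬ sᶜ.Countable := fun hsc =>
  Set.not_countable_univ (by simpa using hs.union hsc)

theorem kappa_singletons_countable_not_necessary :
    (∀ A ∈ kappa {s : Set ℝ | ∃ y : ℝ, s = {y}}, A.Countable) ∧
    ({(0 : ℝ)}ᶜ ∉ kappa {s : Set ℝ | ∃ y : ℝ, s = {y}}) ∧
    ({(0 : ℝ)}ᶜ ∈ sigmaSets {s : Set ℝ | ∃ y : ℝ, s = {y}}) ∧
    ¬ (∀ A ∈ {s : Set ℝ | ∃ y : ℝ, s = {y}}, Aᶜ ∈ kappa {s : Set ℝ | ∃ y : ℝ, s = {y}}) ∧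
    (∀ x : ℝ, atomOf (sigmaSets {s : Set ℝ | ∃ y : ℝ, s = {y}}) x =
      atomOf {s : Set ℝ | ∃ y : ℝ, s = {y}} x) := by
  set C : Set (Set ℝ) := {s | ∃ y : ℝ, s = {y}}
  have singleton_mem (x : ℝ) : {x} ∈ C := ⟨x, rfl⟩
  have kappa_countable (A : Set ℝ) (hA : A ∈ kappa C) : A.Countable :=
    countable_of_mem_kappa (by rintro _ ⟨y, rfl⟩; exact Set.countable_singleton y) hA
  have compl_zero_not_mem : {(0 : ℝ)}ᶜ ∉ kappa C := fun h =>
    not_countable_compl_of_countable (Set.countable_singleton 0) (kappa_countable _ h)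
  exact ⟨kappa_countable, compl_zero_not_mem,
    compl_mem_sigmaSets (subset_sigmaSets C (singleton_mem 0)),
    fun h => compl_zero_not_mem (h _ (singleton_mem 0)),
    fun x => by rw [atomOf_eq_singleton (subset_sigmaSets C (singleton_mem x)),
      atomOf_eq_singleton (singleton_mem x)]⟩
end

section
/- Let Ω be a set and C a collection of subsets of Ω such that Ω is a countable union of members of C (i.e., Ω ∈ C_σ) and such that for all A, B ∈ C the difference A \ B belongs to C_σδ (the collection of countable intersections of countable unions of members of C). Let F = σ(C). Then for every ω ∈ Ω, the atom of F containing ω equals the intersection of all members of C containing ω: A_F(ω) = A_C(ω). -/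
open MeasureTheory Classical

variable {Ω : Type*}

/-
The κ-class `κ(C)` contains `C_σδ`. The hypotheses make the complement of each member of `C` a
countable union of sets in `C_σδ`, so the sets `s` with `s, sᶜ ∈ κ(C)` form a σ-algebra containing
`C`; hence `σ(C) ⊆ κ(C)`. On the other hand the sets `T` with `ω ∈ T → A_C(ω) ⊆ T` form a κ-class
containing `C`, so every member of `σ(C)` containing `ω` contains `A_C(ω)`, i.e. `A_C(ω) ⊆ A_F(ω)`.
The reverse inclusion holds because `C ⊆ σ(C)`.
-/

open Set

namespace IsKappaClass

abbrev toMeasurableSpace {K : Set (Set Ω)} (hK : IsKappaClass K) (h_empty : ∅ ∈ K)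
    (h_univ : univ ∈ K) : MeasurableSpace Ω where
  MeasurableSet' s := s ∈ K ∧ sᶜ ∈ K
  measurableSet_empty := ⟨h_empty, by rwa [compl_empty]⟩
  measurableSet_compl _ hs := ⟨hs.2, by rw [compl_compl]; exact hs.1⟩
  measurableSet_iUnion f hf :=
    ⟨hK.1 f fun n => (hf n).1, by rw [compl_iUnion]; exact hK.2 _ fun n => (hf n).2⟩

end IsKappaClass

section Kappa

variable {C : Set (Set Ω)}

theorem subset_kappa : C ⊆ kappa C :=
  fun _ hA _ hK => hK.2 hA

theorem isKappaClass_kappa (C : Set (Set Ω)) : IsKappaClass (kappa C) :=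
  ⟨fun f hf _ hK => hK.1.1 f fun n => hf n _ hK, fun f hf _ hK => hK.1.2 f fun n => hf n _ hK⟩

theorem kappa_subset {K : Set (Set Ω)} (hK : IsKappaClass K) (hCK : C ⊆ K) : kappa C ⊆ K :=
  fun _ hs => hs K ⟨hK, hCK⟩

theorem sigmaUnions_subset_kappa : sigmaUnions C ⊆ kappa C := by
  rintro _ ⟨f, hf, rfl⟩
  exact (isKappaClass_kappa C).1 f fun n => subset_kappa (hf n)

theorem sigmaDelta_subset_kappa : sigmaDelta C ⊆ kappa C := by
  rintro _ ⟨f, hf, rfl⟩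
  exact (isKappaClass_kappa C).2 f fun n => sigmaUnions_subset_kappa (hf n)

theorem compl_mem_kappa (hΩ : univ ∈ sigmaUnions C)
    (hdiff : ∀ A ∈ C, ∀ B ∈ C, A \ B ∈ sigmaDelta C) {t : Set Ω} (ht : t ∈ C) :
    tᶜ ∈ kappa C := by
  obtain ⟨g, hg, hg_univ⟩ := hΩ
  have h_compl : tᶜ = ⋃ n, g n \ t := by
    rw [← iUnion_sdiff, ← hg_univ, compl_eq_univ_sdiff]
  rw [h_compl]
  exact (isKappaClass_kappa C).1 _ fun n => sigmaDelta_subset_kappa (hdiff _ (hg n) _ ht)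

theorem sigmaSets_subset_kappa (hΩ : univ ∈ sigmaUnions C)
    (hdiff : ∀ A ∈ C, ∀ B ∈ C, A \ B ∈ sigmaDelta C) : sigmaSets C ⊆ kappa C := by
  obtain ⟨g, hg, -⟩ := id hΩ
  have h_empty : ∅ ∈ kappa C := by
    simpa using sigmaDelta_subset_kappa (hdiff _ (hg 0) _ (hg 0))
  let m := (isKappaClass_kappa C).toMeasurableSpace h_empty (sigmaUnions_subset_kappa hΩ)
  have h_le : MeasurableSpace.generateFrom C ≤ m :=
    MeasurableSpace.generateFrom_le fun t ht => ⟨subset_kappa ht, compl_mem_kappa hΩ hdiff ht⟩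
  exact fun s hs => (h_le s hs).1

theorem sInter_subset_of_mem_kappa {ω : Ω} {S : Set Ω} (hS : S ∈ kappa C) (hω : ω ∈ S) :
    ⋂₀ {B | B ∈ C ∧ ω ∈ B} ⊆ S := by
  set A := ⋂₀ {B | B ∈ C ∧ ω ∈ B}
  have hK : IsKappaClass {T : Set Ω | ω ∈ T → A ⊆ T} := by
    refine ⟨fun f hf hωf => ?_, fun f hf hωf => subset_iInter fun n => hf n (mem_iInter.1 hωf n)⟩
    obtain ⟨n, hn⟩ := mem_iUnion.1 hωf
    exact (hf n hn).trans (subset_iUnion f n)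
  exact kappa_subset hK (fun B hB hωB => sInter_subset_of_mem ⟨hB, hωB⟩) hS hω

end Kappa

theorem atom_eq_of_diff_mem_sigmaDelta (C : Set (Set Ω))
    (hΩ : (Set.univ : Set Ω) ∈ sigmaUnions C)
    (hdiff : ∀ A ∈ C, ∀ B ∈ C, A \ B ∈ sigmaDelta C) (ω : Ω) :
    atomOf (sigmaSets C) ω = atomOf C ω := by
  have hCω : ∃ B ∈ C, ω ∈ B := by
    obtain ⟨g, hg, hg_univ⟩ := hΩ
    obtain ⟨n, hn⟩ := mem_iUnion.1 (hg_univ ▸ mem_univ ω)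
    exact ⟨g n, hg n, hn⟩
  have hFω : ∃ B ∈ sigmaSets C, ω ∈ B :=
    ⟨univ, MeasurableSet.univ (m := MeasurableSpace.generateFrom C), mem_univ ω⟩
  rw [atomOf, atomOf, if_pos hFω, if_pos hCω]
  refine subset_antisymm (sInter_subset_sInter fun B hB =>
    ⟨MeasurableSpace.measurableSet_generateFrom hB.1, hB.2⟩) ?_
  exact subset_sInter fun S hS =>
    sInter_subset_of_mem_kappa (sigmaSets_subset_kappa hΩ hdiff hS.1) hS.2
end
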